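/- arXiv:2110.12326 — 2 statements merged into one kernel-verified Lean document; each statement's English description precedes it below -/
import Mathlib

section
/- Suppose E : ℝ^V → ℝ satisfies E(u + c·𝟙) = E(u) + 2πcχ for all c ∈ ℝ, where χ > 0. If E attains its minimum over the set B = {u ∈ ℝ^V : 0 < ∑_{i∈V} R_i e^{α u_i} ≤ 2πχ} at a point u (with α < 0 and R > 0), then ∑_{i∈V} R_i e^{α u_i} = 2πχ, i.e., the minimizer lies on the boundary hypersurface where the constraint holds with equality. -/
open Real

theorem minimizer_on_boundary_B {V : Type*} [Fintype V] [Nonempty V]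
    (α : ℝ) (hα : α < 0) (χ : ℝ) (hχ : 0 < χ)
    (R : V → ℝ) (hR : ∀ i, 0 < R i)
    (E : (V → ℝ) → ℝ) (hEcont : Continuous E)
    (hE : ∀ (u : V → ℝ) (c : ℝ), E (fun i => u i + c) = E u + 2 * Real.pi * c * χ)
    (u₀ : V → ℝ)
    (hu₀ : 0 < ∑ i, R i * Real.exp (α * u₀ i) ∧
           ∑ i, R i * Real.exp (α * u₀ i) ≤ 2 * Real.pi * χ)
    (hmin : ∀ v : V → ℝ,
      (0 < ∑ i, R i * Real.exp (α * v i) ∧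
       ∑ i, R i * Real.exp (α * v i) ≤ 2 * Real.pi * χ) → E u₀ ≤ E v) :
    ∑ i, R i * Real.exp (α * u₀ i) = 2 * Real.pi * χ := by
  by_contra h
  set S := ∑ i, R i * Real.exp (α * u₀ i) with hS
  obtain ⟨hSpos, hSle⟩ := hu₀
  have hlt : S < 2 * Real.pi * χ := lt_of_le_of_ne hSle h
  have hratio : 1 < 2 * Real.pi * χ / S := (one_lt_div hSpos).mpr hlt
  set c := Real.log (2 * Real.pi * χ / S) / α with hc
  have hlog : 0 < Real.log (2 * Real.pi * χ / S) := Real.log_pos hratio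
  have hcneg : c < 0 := div_neg_of_pos_of_neg hlog hα
  have hαc : α * c = Real.log (2 * Real.pi * χ / S) := by
    rw [hc, mul_div_assoc', mul_comm, mul_div_assoc, div_self hα.ne, mul_one]
  have hsum : ∑ i, R i * Real.exp (α * (u₀ i + c)) = 2 * Real.pi * χ := by
    have : ∀ i, R i * Real.exp (α * (u₀ i + c))
        = (R i * Real.exp (α * u₀ i)) * Real.exp (α * c) := by
      intro i
      rw [mul_add, Real.exp_add]; ring
    rw [Finset.sum_congr rfl (fun i _ => this i), ← Finset.sum_mul, ← hS,
      hαc, Real.exp_log (by positivity)]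
    field_simp
  have hfeas : 0 < ∑ i, R i * Real.exp (α * (u₀ i + c)) ∧
      ∑ i, R i * Real.exp (α * (u₀ i + c)) ≤ 2 * Real.pi * χ := by
    rw [hsum]; exact ⟨by positivity, le_refl _⟩
  have := hmin _ hfeas
  rw [hE u₀ c] at this
  nlinarith [Real.pi_pos]
end

section
/- Suppose E : ℝ^V → ℝ satisfies E(u + c·𝟙) = E(u) + 2πcχ for all c ∈ ℝ, where χ < 0. If α > 0 and E attains a minimum over A = {u ∈ ℝ^V : 0 > ∑_{i∈V} R_i e^{α u_i} ≥ 2πχ} at u₀, then ∑_{i∈V} R_i e^{α u_{0,i}} = 2πχ. -/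
open Real

theorem minimizer_on_boundary_A {V : Type*} [Fintype V] [Nonempty V]
    (α : ℝ) (hα : 0 < α) (χ : ℝ) (hχ : χ < 0)
    (R : V → ℝ) (hR : ∀ i, R i ≤ 0) (hR0 : ∃ i, R i ≠ 0)
    (E : (V → ℝ) → ℝ) (hEcont : Continuous E)
    (hE : ∀ (u : V → ℝ) (c : ℝ), E (fun i => u i + c) = E u + 2 * Real.pi * c * χ)
    (u₀ : V → ℝ)
    (hu₀ : ∑ i, R i * Real.exp (α * u₀ i) < 0 ∧
           2 * Real.pi * χ ≤ ∑ i, R i * Real.exp (α * u₀ i))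
    (hmin : ∀ v : V → ℝ,
      (∑ i, R i * Real.exp (α * v i) < 0 ∧
       2 * Real.pi * χ ≤ ∑ i, R i * Real.exp (α * v i)) → E u₀ ≤ E v) :
    ∑ i, R i * Real.exp (α * u₀ i) = 2 * Real.pi * χ := by
  set S := ∑ i, R i * Real.exp (α * u₀ i) with hS
  obtain ⟨hSneg, hSge⟩ := hu₀
  rcases eq_or_lt_of_le hSge with h | h
  · exact h.symm
  · exfalso
    have hχ2 : 2 * Real.pi * χ < 0 := by
      have := Real.pi_pos; nlinarith
    have hratio : 1 < 2 * Real.pi * χ / S := by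
      rw [lt_div_iff_of_neg hSneg]; linarith
    have hratio0 : 0 < 2 * Real.pi * χ / S := lt_trans one_pos hratio
    set c := α⁻¹ * Real.log (2 * Real.pi * χ / S) with hc
    have hcpos : 0 < c := by
      apply mul_pos (inv_pos.mpr hα)
      exact Real.log_pos hratio
    have hexp : Real.exp (α * c) = 2 * Real.pi * χ / S := by
      rw [hc, ← mul_assoc, mul_inv_cancel₀ hα.ne', one_mul, Real.exp_log hratio0]
    have hsum : ∑ i, R i * Real.exp (α * (u₀ i + c)) = 2 * Real.pi * χ := by
      have : ∀ i, R i * Real.exp (α * (u₀ i + c))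
          = (R i * Real.exp (α * u₀ i)) * Real.exp (α * c) := by
        intro i
        rw [mul_add, Real.exp_add]; ring
      rw [Finset.sum_congr rfl fun i _ => this i, ← Finset.sum_mul, ← hS, hexp]
      field_simp [hSneg.ne]
    have hle := hmin (fun i => u₀ i + c) ⟨by rw [hsum]; exact hχ2, by rw [hsum]⟩
    rw [hE u₀ c] at hle
    nlinarith [Real.pi_pos]
end
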